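/- arXiv:2602.21274 — 2 statements merged into one kernel-verified Lean document; each statement's English description precedes it below -/
import Mathlib

section
/- The constants K_0, …, K_{m_p} satisfy the three families of identities: (i) ∑_{j=1}^{m_p+1} K_{j−1} = b* − c; (ii) ∑_{j=1}^{m_p+1} r_{j−1}·K_{j−1} = 1; and (iii) for every k ∈ {1, …, m_p}, ∑_{j=1}^{m_p+1} β_k^p·K_{j−1}/(β_k^p − r_{j−1}) = b* − c + 1/β_k^p. -/
open Finset Matrix MeasureTheory

/-- The (i,j) cofactor of a square matrix: (−1)^(i+j) times the determinant of the
submatrix obtained by deleting row `i` and column `j`. -/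
noncomputable def cof {n : ℕ} (M : Matrix (Fin (n + 1)) (Fin (n + 1)) ℝ)
    (i j : Fin (n + 1)) : ℝ :=
  (-1 : ℝ) ^ ((i : ℕ) + (j : ℕ)) * (M.submatrix i.succAbove j.succAbove).det

/-!
The vector `w = A⁻¹ e₀`, i.e. `w j = cof A 0 j / det A`, is the vector of residues of the
rational function `∏ᵢ (x - βᵢ) / ∏ⱼ (x - rⱼ)` at its simple poles `rⱼ`: the first row of
`A w = e₀` says that the residues add up to the leading coefficient `1`, the other rows that the
partial fraction expansion vanishes at the zeros `βₖ`. Hence `Kⱼ = R wⱼ / rⱼ²`, and evaluating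
the partial fraction expansion and its derivative at `0` gives `∑ wⱼ / rⱼ = 1 / R` and
`∑ wⱼ / rⱼ² = (b* - c) / R`, which are (ii) and (i). Identity (iii) follows from these and row
`k` of `A w = e₀`, since `β / (r² (β - r)) = 1 / r² + 1 / (β r) + 1 / (β (β - r))`.
-/

open Polynomial

namespace Lagrange

variable {F ι κ : Type*} [Field F] {s : Finset ι} {v : ι → F} {t : Finset κ} {u : κ → F} {x : F}

theorem degree_nodal_lt_of_card_eq (hst : #s = #t + 1) : (nodal t u).degree < #s := by
  rw [degree_nodal, hst]
  exact_mod_cast Nat.lt_succ_self _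

variable [DecidableEq ι]

theorem eval_nodal_erase {i : ι} (hi : i ∈ s) (hx : x ≠ v i) :
    (nodal (s.erase i) v).eval x = (nodal s v).eval x * (x - v i)⁻¹ := by
  rw [nodal_eq_mul_nodal_erase hi, eval_mul, eval_sub, eval_X, eval_C,
    mul_comm, inv_mul_cancel_left₀ (sub_ne_zero.2 hx)]

theorem eval_derivative_nodal (hx : ∀ i ∈ s, x ≠ v i) :
    (derivative (nodal s v)).eval x = (nodal s v).eval x * ∑ i ∈ s, (x - v i)⁻¹ := by
  rw [derivative_nodal, eval_finsetSum, mul_sum]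
  exact sum_congr rfl fun i hi => eval_nodal_erase hi (hx i hi)

theorem eq_sum_C_mul_nodal_erase (hvs : Set.InjOn v s) {P : F[X]} (hP : P.degree < #s) :
    P = ∑ i ∈ s, C (nodalWeight s v i * P.eval (v i)) * nodal (s.erase i) v := by
  conv_lhs => rw [eq_interpolate hvs hP, interpolate_eq_nodalWeight_mul_nodal_div_X_sub_C]
  refine sum_congr rfl fun i hi => ?_
  rw [← nodal_erase_eq_nodal_div hi, C_mul]
  ring

/-- When `P.degree < #s`, `P / nodal s v = ∑ i ∈ s, nodalResidue s v P i / (X - v i)`. -/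
def nodalResidue (s : Finset ι) (v : ι → F) (P : F[X]) (i : ι) : F :=
  nodalWeight s v i * P.eval (v i)

variable {P : F[X]}

theorem sum_nodalResidue (hvs : Set.InjOn v s) (hP : P.degree < #s) :
    ∑ i ∈ s, nodalResidue s v P i = P.coeff (#s - 1) := by
  rw [coeff_eq_sum hvs hP]
  refine sum_congr rfl fun i _ => ?_
  rw [nodalResidue, nodalWeight, prod_inv_distrib, div_eq_mul_inv, mul_comm]

theorem eval_eq_eval_nodal_mul_sum (hvs : Set.InjOn v s) (hP : P.degree < #s)
    (hx : ∀ i ∈ s, x ≠ v i) :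
    P.eval x = (nodal s v).eval x * ∑ i ∈ s, nodalResidue s v P i * (x - v i)⁻¹ := by
  conv_lhs => rw [eq_sum_C_mul_nodal_erase hvs hP]
  rw [eval_finsetSum, mul_sum]
  refine sum_congr rfl fun i hi => ?_
  rw [eval_mul, eval_C, eval_nodal_erase hi (hx i hi), nodalResidue]
  ring

theorem eval_nodal_mul_sum_div_sq (hvs : Set.InjOn v s) (hP : P.degree < #s)
    (hx : ∀ i ∈ s, x ≠ v i) :
    (nodal s v).eval x * ∑ i ∈ s, nodalResidue s v P i * ((x - v i) ^ 2)⁻¹ =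
      P.eval x * ∑ i ∈ s, (x - v i)⁻¹ - (derivative P).eval x := by
  set S := ∑ i ∈ s, (x - v i)⁻¹
  have hD : (derivative P).eval x = ∑ i ∈ s, nodalResidue s v P i *
      ((nodal s v).eval x * (x - v i)⁻¹ * (S - (x - v i)⁻¹)) := by
    conv_lhs => rw [eq_sum_C_mul_nodal_erase hvs hP]
    simp only [derivative_sum, derivative_C_mul, eval_finsetSum, eval_mul, eval_C]
    refine sum_congr rfl fun i hi => ?_
    rw [eval_derivative_nodal fun k hk => hx k (mem_of_mem_erase hk),
      eval_nodal_erase hi (hx i hi), sum_erase_eq_sub hi, nodalResidue]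
  rw [hD, eval_eq_eval_nodal_mul_sum hvs hP hx]
  simp only [mul_sum, sum_mul, ← sum_sub_distrib]
  refine sum_congr rfl fun i _ => ?_
  rw [← inv_pow]
  ring

theorem sum_nodalResidue_nodal (hvs : Set.InjOn v s) (hst : #s = #t + 1) :
    ∑ i ∈ s, nodalResidue s v (nodal t u) i = 1 := by
  rw [sum_nodalResidue hvs (degree_nodal_lt_of_card_eq (u := u) hst), hst, Nat.add_sub_cancel,
    ← natDegree_nodal (v := u)]
  exact nodal_monic.coeff_natDegree

theorem sum_nodalResidue_nodal_mul_inv_sub (hvs : Set.InjOn v s) (hst : #s = #t + 1) {j : κ}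
    (hj : j ∈ t) (hu : ∀ i ∈ s, u j ≠ v i) :
    ∑ i ∈ s, nodalResidue s v (nodal t u) i * (u j - v i)⁻¹ = 0 := by
  have h := eval_eq_eval_nodal_mul_sum hvs (degree_nodal_lt_of_card_eq (u := u) hst) hu
  rw [eval_nodal_at_node hj, eq_comm, mul_eq_zero] at h
  exact h.resolve_left (eval_nodal_not_at_node hu)

theorem sum_nodalResidue_nodal_div (hvs : Set.InjOn v s) (hst : #s = #t + 1)
    (hv : ∀ i ∈ s, v i ≠ 0) :
    ∑ i ∈ s, nodalResidue s v (nodal t u) i / v i = (∏ j ∈ t, u j) / ∏ i ∈ s, v i := by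
  have h := eval_eq_eval_nodal_mul_sum hvs (degree_nodal_lt_of_card_eq (u := u) hst) (x := 0)
    fun i hi => (hv i hi).symm
  simp only [eval_nodal, zero_sub, prod_neg, hst, inv_neg, mul_neg, sum_neg_distrib] at h
  have hsign : ((-1 : F) ^ #t) ≠ 0 := pow_ne_zero _ (neg_ne_zero.2 one_ne_zero)
  rw [eq_div_iff (prod_ne_zero_iff.2 hv)]
  simp only [div_eq_mul_inv]
  exact mul_left_cancel₀ hsign (by linear_combination -h)

theorem sum_nodalResidue_nodal_div_sq (hvs : Set.InjOn v s) (hst : #s = #t + 1)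
    (hv : ∀ i ∈ s, v i ≠ 0) (hu : ∀ j ∈ t, u j ≠ 0) :
    ∑ i ∈ s, nodalResidue s v (nodal t u) i / v i ^ 2 =
      (∏ j ∈ t, u j) / (∏ i ∈ s, v i) * (∑ i ∈ s, 1 / v i - ∑ j ∈ t, 1 / u j) := by
  classical
  have h := eval_nodal_mul_sum_div_sq hvs (degree_nodal_lt_of_card_eq (u := u) hst) (x := 0)
    fun i hi => (hv i hi).symm
  rw [eval_derivative_nodal fun j hj => (hu j hj).symm] at h
  simp only [eval_nodal, zero_sub, prod_neg, hst, inv_neg, sum_neg_distrib, neg_sq] at h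
  have hsign : ((-1 : F) ^ #t) ≠ 0 := pow_ne_zero _ (neg_ne_zero.2 one_ne_zero)
  rw [div_mul_eq_mul_div, eq_div_iff (prod_ne_zero_iff.2 hv)]
  simp only [div_eq_mul_inv, one_mul]
  exact mul_left_cancel₀ hsign (by linear_combination -h)

end Lagrange

open Lagrange

theorem cof_eq_adjugate {n : ℕ} (M : Matrix (Fin (n + 1)) (Fin (n + 1)) ℝ) (i j : Fin (n + 1)) :
    cof M i j = M.adjugate j i := by
  rw [cof, adjugate_fin_succ_eq_det_submatrix]

theorem cof_div_det_eq_of_mulVec_eq_single {n : ℕ} {M : Matrix (Fin (n + 1)) (Fin (n + 1)) ℝ}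
    (hM : M.det ≠ 0) {w : Fin (n + 1) → ℝ} {i : Fin (n + 1)} (hw : M *ᵥ w = Pi.single i 1)
    (j : Fin (n + 1)) : cof M i j / M.det = w j := by
  have hw' : w = M⁻¹ *ᵥ Pi.single i 1 := by
    rw [← hw, mulVec_mulVec, nonsing_inv_mul _ (isUnit_iff_ne_zero.2 hM), one_mulVec]
  rw [hw', mulVec_single_one, Matrix.inv_def, Ring.inverse_eq_inv', cof_eq_adjugate]
  simp [div_eq_inv_mul]

theorem mulVec_nodalResidue_eq_single {n : ℕ} {A : Matrix (Fin (n + 1)) (Fin (n + 1)) ℝ}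
    {β r : ℕ → ℝ} (hA : ∀ i j : Fin (n + 1), A i j = if (i : ℕ) = 0 then 1 else β i / (β i - r j))
    (hr : Set.InjOn r (range (n + 1))) (hβr : ∀ k ∈ Icc 1 n, ∀ j ∈ range (n + 1), β k ≠ r j) :
    A *ᵥ (fun j => nodalResidue (range (n + 1)) r (nodal (Icc 1 n) β) j) = Pi.single 0 1 := by
  set w := nodalResidue (range (n + 1)) r (nodal (Icc 1 n) β)
  have hcard : #(range (n + 1)) = #(Icc 1 n) + 1 := by simp
  ext i
  simp only [mulVec, dotProduct, hA]
  rcases Fin.eq_zero_or_eq_succ i with rfl | ⟨i, rfl⟩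
  · simp only [Fin.val_zero, if_true, one_mul, Pi.single_eq_same]
    rw [Fin.sum_univ_eq_sum_range w, sum_nodalResidue_nodal hr hcard]
  · have hk : (i : ℕ) + 1 ∈ Icc 1 n := by simp [Nat.succ_le_of_lt i.isLt]
    simp only [Fin.val_succ, Nat.add_one_ne_zero, if_false, Pi.single_apply, Fin.succ_ne_zero]
    rw [Fin.sum_univ_eq_sum_range (fun j => β (i + 1) / (β (i + 1) - r j) * w j),
      ← mul_zero (β (i + 1)), ← sum_nodalResidue_nodal_mul_inv_sub hr hcard hk (hβr _ hk),
      mul_sum]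
    exact sum_congr rfl fun j _ => by ring

section Interlacing

variable {n : ℕ} {r β : ℕ → ℝ}

theorem strictMonoOn_Iic_of_interlace (h : ∀ k, 1 ≤ k → k ≤ n → r (k - 1) < β k ∧ β k < r k) :
    StrictMonoOn r (Set.Iic n) :=
  strictMonoOn_Iic_of_lt_succ fun m hm => by
    simpa using (h (m + 1) (by omega) hm).1.trans (h (m + 1) (by omega) hm).2

theorem injOn_range_of_interlace (h : ∀ k, 1 ≤ k → k ≤ n → r (k - 1) < β k ∧ β k < r k) :
    Set.InjOn r (range (n + 1)) :=
  (strictMonoOn_Iic_of_interlace h).injOn.mono fun _ hj => Nat.lt_succ_iff.1 (mem_range.1 hj)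

theorem pos_of_interlace (hr0 : 0 < r 0)
    (h : ∀ k, 1 ≤ k → k ≤ n → r (k - 1) < β k ∧ β k < r k) {j : ℕ} (hj : j ∈ range (n + 1)) :
    0 < r j :=
  hr0.trans_le <| (strictMonoOn_Iic_of_interlace h).monotoneOn (by simp)
    (Nat.lt_succ_iff.1 (mem_range.1 hj)) (Nat.zero_le j)

theorem pos_of_interlace_of_mem_Icc (hr0 : 0 < r 0)
    (h : ∀ k, 1 ≤ k → k ≤ n → r (k - 1) < β k ∧ β k < r k) {k : ℕ} (hk : k ∈ Icc 1 n) :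
    0 < β k := by
  obtain ⟨hk1, hkn⟩ := mem_Icc.1 hk
  exact (pos_of_interlace hr0 h (mem_range.2 (by omega))).trans (h k hk1 hkn).1

theorem ne_of_interlace (h : ∀ k, 1 ≤ k → k ≤ n → r (k - 1) < β k ∧ β k < r k) {k j : ℕ}
    (hk : k ∈ Icc 1 n) (hj : j ∈ range (n + 1)) : β k ≠ r j := by
  obtain ⟨hk1, hkn⟩ := mem_Icc.1 hk
  have hjn : j ≤ n := Nat.lt_succ_iff.1 (mem_range.1 hj)
  have hmono := (strictMonoOn_Iic_of_interlace h).monotoneOn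
  rcases lt_or_ge j k with hjk | hkj
  · exact ((hmono hjn (by simp; omega) (by omega : j ≤ k - 1)).trans_lt (h k hk1 hkn).1).ne'
  · exact ((h k hk1 hkn).2.trans_le (hmono (by simpa using hkn) hjn hkj)).ne

end Interlacing

theorem sum_mul_div_sub_eq {ι : Type*} {s : Finset ι} {r K w : ι → ℝ} {R β : ℝ}
    (hK : ∀ j ∈ s, K j = R * w j / r j ^ 2) (hr : ∀ j ∈ s, r j ≠ 0) (hβ : β ≠ 0)
    (hβr : ∀ j ∈ s, β ≠ r j) (hw : ∑ j ∈ s, w j * (β - r j)⁻¹ = 0) :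
    ∑ j ∈ s, β * K j / (β - r j) = ∑ j ∈ s, K j + (∑ j ∈ s, r j * K j) / β := by
  have hterm : ∀ j ∈ s, β * K j / (β - r j) =
      K j + r j * K j / β + R / β * (w j * (β - r j)⁻¹) := by
    intro j hj
    rw [hK j hj]
    field_simp [hr j hj, sub_ne_zero.2 (hβr j hj)]
    ring
  rw [sum_congr rfl hterm, sum_add_distrib, sum_add_distrib, ← mul_sum, hw, mul_zero, add_zero,
    sum_div]

theorem stmt6_general (c : ℝ)
    (mp : ℕ)
    (βp : ℕ → ℝ)
    (r : ℕ → ℝ)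
    (hr0 : 0 < r 0)
    (hinter : ∀ k, 1 ≤ k → k ≤ mp → r (k - 1) < βp k ∧ βp k < r k)
    (A : Matrix (Fin (mp + 1)) (Fin (mp + 1)) ℝ)
    (hA : ∀ i j : Fin (mp + 1), A i j = if (i : ℕ) = 0 then 1 else βp i / (βp i - r j))
    (hdet : A.det ≠ 0)
    (R : ℝ)
    (hR : R = (∏ k ∈ Finset.range (mp + 1), r k) / ∏ k ∈ Finset.Icc 1 mp, βp k)
    (K : ℕ → ℝ)
    (hK : ∀ j : Fin (mp + 1), K j = R * cof A 0 j / ((r j) ^ 2 * A.det))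
    (b : ℝ)
    (hb : b = c + (∑ i ∈ Finset.range (mp + 1), 1 / r i) - ∑ i ∈ Finset.Icc 1 mp, 1 / βp i)
    :
    (∑ j ∈ Finset.range (mp + 1), K j = b - c) ∧
    (∑ j ∈ Finset.range (mp + 1), r j * K j = 1) ∧
    (∀ k, 1 ≤ k → k ≤ mp →
      ∑ j ∈ Finset.range (mp + 1), βp k * K j / (βp k - r j) = b - c + 1 / βp k) := by
  set w := nodalResidue (range (mp + 1)) r (nodal (Icc 1 mp) βp)
  have hcard : #(range (mp + 1)) = #(Icc 1 mp) + 1 := by simp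
  have hinj := injOn_range_of_interlace hinter
  have hr : ∀ j ∈ range (mp + 1), r j ≠ 0 := fun j hj => (pos_of_interlace hr0 hinter hj).ne'
  have hβ : ∀ k ∈ Icc 1 mp, βp k ≠ 0 := fun k hk =>
    (pos_of_interlace_of_mem_Icc hr0 hinter hk).ne'
  have hβr : ∀ k ∈ Icc 1 mp, ∀ j ∈ range (mp + 1), βp k ≠ r j := fun _ hk _ =>
    ne_of_interlace hinter hk
  have hKw : ∀ j ∈ range (mp + 1), K j = R * w j / r j ^ 2 := by
    intro j hj
    have hw : cof A 0 ⟨j, mem_range.1 hj⟩ / A.det = w j := cof_div_det_eq_of_mulVec_eq_single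
      hdet (mulVec_nodalResidue_eq_single hA hinj hβr) ⟨j, mem_range.1 hj⟩
    rw [hK ⟨j, mem_range.1 hj⟩, ← hw]
    field_simp
  have hR_mul : R * ((∏ k ∈ Icc 1 mp, βp k) / ∏ j ∈ range (mp + 1), r j) = 1 := by
    rw [hR, div_mul_div_comm, mul_comm]
    exact div_self (mul_ne_zero (prod_ne_zero_iff.2 hβ) (prod_ne_zero_iff.2 hr))
  have hsum_rK : ∑ j ∈ range (mp + 1), r j * K j = 1 := calc
    _ = R * ∑ j ∈ range (mp + 1), w j / r j := by
      rw [mul_sum]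
      exact sum_congr rfl fun j hj => by rw [hKw j hj]; field_simp [hr j hj]
    _ = 1 := by rw [sum_nodalResidue_nodal_div hinj hcard hr, hR_mul]
  have hsum_K : ∑ j ∈ range (mp + 1), K j = b - c := calc
    _ = R * ∑ j ∈ range (mp + 1), w j / r j ^ 2 := by
      rw [mul_sum]
      exact sum_congr rfl fun j hj => by rw [hKw j hj, mul_div_assoc]
    _ = b - c := by
      rw [sum_nodalResidue_nodal_div_sq hinj hcard hr hβ, ← mul_assoc, hR_mul, one_mul, hb]
      ring
  refine ⟨hsum_K, hsum_rK, fun k hk1 hk2 => ?_⟩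
  have hk : k ∈ Icc 1 mp := mem_Icc.2 ⟨hk1, hk2⟩
  rw [sum_mul_div_sub_eq hKw hr (hβ k hk) (hβr k hk)
    (sum_nodalResidue_nodal_mul_inv_sub hinj hcard hk (hβr k hk)), hsum_K, hsum_rK]

theorem stmt6 (σ μ ρ lamn lamp c : ℝ)
    (hσ : 0 < σ) (hρ : 0 < ρ) (hlamn : 0 < lamn) (hlamp : 0 < lamp) (hc : 0 < c)
    (mp mn : ℕ) (hmp : 1 ≤ mp) (hmn : 1 ≤ mn)
    (ωp βp ωn βn : ℕ → ℝ)
    (hωp : ∀ k, 1 ≤ k → k ≤ mp → 0 < ωp k)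
    (hωpsum : ∑ k ∈ Finset.Icc 1 mp, ωp k = 1)
    (hβp1 : 0 < βp 1)
    (hβpmono : ∀ k, 1 ≤ k → k < mp → βp k < βp (k + 1))
    (hωn : ∀ k, 1 ≤ k → k ≤ mn → 0 < ωn k)
    (hωnsum : ∑ k ∈ Finset.Icc 1 mn, ωn k = 1)
    (hβn1 : 0 < βn 1)
    (hβnmono : ∀ k, 1 ≤ k → k < mn → βn k < βn (k + 1))
    (r : ℕ → ℝ)
    (hroot : ∀ j, j ≤ mp →
      σ ^ 2 * (r j) ^ 2 / 2 + μ * r j - (ρ + lamn + lamp)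
        + lamp * ∑ i ∈ Finset.Icc 1 mp, ωp i * βp i / (βp i - r j)
        + lamn * ∑ i ∈ Finset.Icc 1 mn, ωn i * βn i / (r j + βn i) = 0)
    (hr0 : 0 < r 0)
    (hinter : ∀ k, 1 ≤ k → k ≤ mp → r (k - 1) < βp k ∧ βp k < r k)
    (A : Matrix (Fin (mp + 1)) (Fin (mp + 1)) ℝ)
    (hA : ∀ i j : Fin (mp + 1), A i j = if (i : ℕ) = 0 then 1 else βp i / (βp i - r j))
    (hdet : A.det ≠ 0)
    (R : ℝ)
    (hR : R = (∏ k ∈ Finset.range (mp + 1), r k) / ∏ k ∈ Finset.Icc 1 mp, βp k)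
    (K : ℕ → ℝ)
    (hK : ∀ j : Fin (mp + 1), K j = R * cof A 0 j / ((r j) ^ 2 * A.det))
    (b : ℝ)
    (hb : b = c + (∑ i ∈ Finset.range (mp + 1), 1 / r i) - ∑ i ∈ Finset.Icc 1 mp, 1 / βp i)
    :
    (∑ j ∈ Finset.range (mp + 1), K j = b - c) ∧
    (∑ j ∈ Finset.range (mp + 1), r j * K j = 1) ∧
    (∀ k, 1 ≤ k → k ≤ mp →
      ∑ j ∈ Finset.range (mp + 1), βp k * K j / (βp k - r j) = b - c + 1 / βp k) :=
  stmt6_general c mp βp r hr0 hinter A hA hdet R hR K hK b hb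
end

section
/- The function v is continuous on ℝ × [0,∞); for every y > 0 the map x ↦ v(x,y) is twice continuously differentiable on ℝ; for every x ∈ ℝ the map y ↦ v(x,y) is continuously differentiable on (0,∞); and v(x,0) = 0 for every x ∈ ℝ. -/
/-!
Let `G` be `f` on `(-∞, b*)` and `0` on `[b*, ∞)`, where
`f t = ∑ⱼ Kⱼ / (α rⱼ) (exp (rⱼ (t - b*)) - 1) - ((t - c)² - (b* - c)²) / (2α)`.
In each of the three regions, `v x y = (x - c) y - α y² / 2 + G x - G (x - α y)` for `y ≥ 0`,
so everything follows once `G` is `C²`. As `f b* = 0`, this amounts to `f' b* = f'' b* = 0`,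
i.e. to the smooth-fit conditions `∑ Kⱼ = b* - c` and `∑ Kⱼ rⱼ = 1`.

Both come from the cofactors. `zⱼ = Cof_{1,j}[A] / det A` is the first column of `A⁻¹`, so
`∑ zⱼ = 1` and `∑ⱼ zⱼ / (βᵢ - rⱼ) = 0` for every `i`. Hence `∑ⱼ zⱼ ∏_{k ≠ j} (rₖ - X)` and
`∏ᵢ (βᵢ - X)` have the same leading coefficient and agree at the `m_p` distinct nodes `βᵢ`, so
they are equal. Evaluating this identity and its derivative at `0` gives
`∑ zⱼ / rⱼ = ∏ β / ∏ r` and `∑ zⱼ / rⱼ² = (∏ β / ∏ r) (∑ 1 / rⱼ - ∑ 1 / βᵢ)`.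
-/

open Finset Matrix MeasureTheory

open Polynomial Lagrange Real

theorem cof_zero_div_det_eq_inv_apply {n : ℕ} (M : Matrix (Fin (n + 1)) (Fin (n + 1)) ℝ)
    (j : Fin (n + 1)) : cof M 0 j / M.det = M⁻¹ j 0 := by
  rw [Matrix.inv_def, Matrix.smul_apply, adjugate_fin_succ_eq_det_submatrix, cof,
    Ring.inverse_eq_inv', smul_eq_mul, div_eq_inv_mul]

theorem sum_mul_cof_zero_div_det {n : ℕ} {M : Matrix (Fin (n + 1)) (Fin (n + 1)) ℝ}
    (hM : M.det ≠ 0) (i : Fin (n + 1)) :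
    ∑ j, M i j * (cof M 0 j / M.det) = (1 : Matrix (Fin (n + 1)) (Fin (n + 1)) ℝ) i 0 := by
  simp_rw [cof_zero_div_det_eq_inv_apply]
  rw [← mul_apply, mul_nonsing_inv _ (isUnit_iff_ne_zero.2 hM)]

section CofactorWeights

variable {n : ℕ} {r β : ℕ → ℝ} {A : Matrix (Fin (n + 1)) (Fin (n + 1)) ℝ}

theorem sum_cof_zero_div_det_eq_one (hA : ∀ j, A 0 j = 1) (hdet : A.det ≠ 0) :
    ∑ j, cof A 0 j / A.det = 1 := by
  simpa [hA] using sum_mul_cof_zero_div_det hdet 0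

theorem sum_cof_zero_div_det_div_sub_eq_zero
    (hA : ∀ i j : Fin (n + 1), A i j = if (i : ℕ) = 0 then 1 else β i / (β i - r j))
    (hdet : A.det ≠ 0) {i : ℕ} (hi : i ∈ Icc 1 n) (hβ : β i ≠ 0) :
    ∑ j : Fin (n + 1), cof A 0 j / A.det / (β i - r j) = 0 := by
  obtain ⟨hi1, hin⟩ := mem_Icc.1 hi
  have hrow := sum_mul_cof_zero_div_det hdet ⟨i, by omega⟩
  rw [one_apply_ne (Fin.ne_of_val_ne (by simp; omega))] at hrow
  simp only [hA, Nat.pos_iff_ne_zero.1 hi1, if_false, div_mul_eq_mul_div, mul_div_assoc,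
    ← mul_sum] at hrow
  exact (mul_eq_zero.1 hrow).resolve_left hβ

end CofactorWeights

def Interlaces (r β : ℕ → ℝ) (n : ℕ) : Prop :=
  ∀ k, 1 ≤ k → k ≤ n → r (k - 1) < β k ∧ β k < r k

namespace Interlaces

variable {r β : ℕ → ℝ} {n : ℕ}

theorem strictMonoOn (h : Interlaces r β n) : StrictMonoOn r (Set.Iic n) :=
  strictMonoOn_Iic_of_lt_succ fun m hm => by
    obtain ⟨hlt, hgt⟩ := h (m + 1) (by omega) (Order.succ_le_of_lt hm)
    rw [Nat.add_sub_cancel] at hlt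
    exact hlt.trans hgt

theorem pos (h : Interlaces r β n) (hr0 : 0 < r 0) {j : ℕ} (hj : j ≤ n) : 0 < r j :=
  hr0.trans_le <| h.strictMonoOn.monotoneOn (Set.mem_Iic.2 (Nat.zero_le n)) (Set.mem_Iic.2 hj)
    (Nat.zero_le j)

theorem lt (h : Interlaces r β n) {i j : ℕ} (hi : 1 ≤ i) (hin : i ≤ n) (hji : j < i) :
    r j < β i :=
  (h.strictMonoOn.monotoneOn (Set.mem_Iic.2 (by omega)) (Set.mem_Iic.2 (by omega))
    (by omega : j ≤ i - 1)).trans_lt (h i hi hin).1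

theorem gt (h : Interlaces r β n) {i j : ℕ} (hi : 1 ≤ i) (hj : j ≤ n) (hij : i ≤ j) :
    β i < r j :=
  (h i hi (hij.trans hj)).2.trans_le <| h.strictMonoOn.monotoneOn
    (Set.mem_Iic.2 (hij.trans hj)) (Set.mem_Iic.2 hj) hij

theorem ne (h : Interlaces r β n) {i j : ℕ} (hi : 1 ≤ i) (hin : i ≤ n) (hj : j ≤ n) :
    β i ≠ r j := by
  rcases lt_or_ge j i with hji | hij
  · exact (h.lt hi hin hji).ne'
  · exact (h.gt hi hj hij).ne

theorem injOn (h : Interlaces r β n) : Set.InjOn β (Icc 1 n : Finset ℕ) := by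
  refine StrictMonoOn.injOn (fun i hi i' hi' hii' => ?_)
  simp only [coe_Icc, Set.mem_Icc] at hi hi'
  exact (h.gt hi.1 (hii'.le.trans hi'.2) le_rfl).trans (h.lt (hi.1.trans hii'.le) hi'.2 hii')

end Interlaces

section PartialFractions

variable {F ι κ : Type*} [Field F] {s : Finset ι} {t : Finset κ}
  {r : ι → F} {β : κ → F} {z : ι → F}

theorem sum_C_mul_nodal_erase_eq_nodal [DecidableEq ι] (hcard : #s = #t + 1)
    (hz : ∑ j ∈ s, z j = 1) (hzβ : ∀ i ∈ t, ∑ j ∈ s, z j / (β i - r j) = 0)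
    (hβ : Set.InjOn β t) (hβr : ∀ i ∈ t, ∀ j ∈ s, β i ≠ r j) :
    ∑ j ∈ s, C (z j) * nodal (s.erase j) r = nodal t β := by
  refine eq_of_degree_sub_lt_of_eval_index_eq t hβ ?_ fun i hi => ?_
  · have hsplit : ∑ j ∈ s, C (z j) * nodal (s.erase j) r - nodal t β
        = ∑ j ∈ s, C (z j) * (nodal (s.erase j) r - nodal t β) := by
      simp only [mul_sub, sum_sub_distrib, ← sum_mul, ← map_sum, hz, map_one, one_mul]
    rw [hsplit, ← mem_degreeLT]
    refine Submodule.sum_mem _ fun j hj => ?_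
    rw [← smul_eq_C_mul]
    refine Submodule.smul_mem _ _ ?_
    have hdeg : (nodal (s.erase j) r).degree = #t := by
      rw [degree_nodal, card_erase_of_mem hj, hcard, Nat.add_sub_cancel]
    rw [mem_degreeLT, ← hdeg]
    exact degree_sub_lt_left (hdeg.trans degree_nodal.symm) nodal_ne_zero
      (by rw [nodal_monic.leadingCoeff, nodal_monic.leadingCoeff])
  · have hterm : ∀ j ∈ s, eval (β i) (C (z j) * nodal (s.erase j) r)
        = z j / (β i - r j) * eval (β i) (nodal s r) := by
      intro j hj
      rw [nodal_eq_mul_nodal_erase hj, eval_mul, eval_mul, eval_C, eval_sub, eval_X, eval_C]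
      field_simp [sub_ne_zero.2 (hβr i hi j hj)]
    rw [eval_nodal_at_node hi, eval_finsetSum, sum_congr rfl hterm, ← sum_mul, hzβ i hi,
      zero_mul]

theorem prod_C_sub_X_eq_neg_one_pow_mul_nodal (u : Finset ι) (r : ι → F) :
    ∏ k ∈ u, (C (r k) - X) = (-1) ^ #u * nodal u r := by
  rw [nodal_eq, ← prod_neg]
  simp only [neg_sub]

theorem sum_C_mul_prod_erase_C_sub_X_eq [DecidableEq ι] (hcard : #s = #t + 1)
    (hz : ∑ j ∈ s, z j = 1) (hzβ : ∀ i ∈ t, ∑ j ∈ s, z j / (β i - r j) = 0)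
    (hβ : Set.InjOn β t) (hβr : ∀ i ∈ t, ∀ j ∈ s, β i ≠ r j) :
    ∑ j ∈ s, C (z j) * ∏ k ∈ s.erase j, (C (r k) - X) = ∏ i ∈ t, (C (β i) - X) := by
  rw [prod_C_sub_X_eq_neg_one_pow_mul_nodal, ← sum_C_mul_nodal_erase_eq_nodal hcard hz hzβ hβ hβr,
    mul_sum]
  refine sum_congr rfl fun j hj => ?_
  rw [prod_C_sub_X_eq_neg_one_pow_mul_nodal, card_erase_of_mem hj, hcard, Nat.add_sub_cancel]
  ring

theorem prod_erase_eq_prod_mul_inv [DecidableEq ι] {u : Finset ι} {f : ι → F} {a : ι}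
    (ha : a ∈ u) (hfa : f a ≠ 0) : ∏ k ∈ u.erase a, f k = (∏ k ∈ u, f k) * (f a)⁻¹ := by
  rw [← mul_prod_erase u f ha]
  field_simp

theorem sum_prod_erase_eq_prod_mul_sum_inv [DecidableEq ι] {u : Finset ι} {f : ι → F}
    (hf : ∀ k ∈ u, f k ≠ 0) :
    ∑ l ∈ u, ∏ k ∈ u.erase l, f k = (∏ k ∈ u, f k) * ∑ l ∈ u, (f l)⁻¹ := by
  rw [mul_sum]
  exact sum_congr rfl fun l hl => prod_erase_eq_prod_mul_inv hl (hf l hl)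

theorem sum_div_mul_prod_eq_prod [DecidableEq ι]
    (h : ∑ j ∈ s, C (z j) * ∏ k ∈ s.erase j, (C (r k) - X) = ∏ i ∈ t, (C (β i) - X))
    (hr : ∀ j ∈ s, r j ≠ 0) :
    (∑ j ∈ s, z j / r j) * ∏ j ∈ s, r j = ∏ i ∈ t, β i := by
  have h0 := congrArg (eval 0) h
  simp only [eval_finsetSum, eval_mul, eval_C, eval_prod, eval_sub, eval_X, sub_zero] at h0
  rw [← h0, sum_mul]
  refine sum_congr rfl fun j hj => ?_
  rw [prod_erase_eq_prod_mul_inv hj (hr j hj)]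
  field_simp

theorem sum_div_sq_mul_prod_eq [DecidableEq ι] [DecidableEq κ]
    (h : ∑ j ∈ s, C (z j) * ∏ k ∈ s.erase j, (C (r k) - X) = ∏ i ∈ t, (C (β i) - X))
    (hr : ∀ j ∈ s, r j ≠ 0) (hβ : ∀ i ∈ t, β i ≠ 0) :
    (∑ j ∈ s, z j / r j ^ 2) * ∏ j ∈ s, r j
      = (∏ i ∈ t, β i) * (∑ j ∈ s, (r j)⁻¹ - ∑ i ∈ t, (β i)⁻¹) := by
  have h1 := congrArg (fun p => eval 0 (derivative p)) h
  simp only [derivative_sum, derivative_C_mul, derivative_prod_finset, derivative_sub,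
    derivative_C, derivative_X, eval_finsetSum, eval_mul, eval_C, eval_prod, eval_sub, eval_X,
    eval_neg, sub_zero, zero_sub, mul_one, sum_neg_distrib, mul_neg, neg_inj] at h1
  have hterm : ∀ j ∈ s, z j * ∑ l ∈ s.erase j, ∏ k ∈ (s.erase j).erase l, r k
      = (∑ l ∈ s, (r l)⁻¹) * (z j / r j * ∏ k ∈ s, r k) - z j / r j ^ 2 * ∏ k ∈ s, r k := by
    intro j hj
    rw [sum_prod_erase_eq_prod_mul_sum_inv fun k hk => hr k (mem_of_mem_erase hk),
      sum_erase_eq_sub hj, prod_erase_eq_prod_mul_inv hj (hr j hj)]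
    field_simp [hr j hj]
  rw [sum_prod_erase_eq_prod_mul_sum_inv hβ, sum_congr rfl hterm, sum_sub_distrib, ← mul_sum,
    ← sum_mul, ← sum_mul, sum_div_mul_prod_eq_prod h hr] at h1
  linear_combination -h1

end PartialFractions

section SmoothFitConditions

variable {n : ℕ} {r β K : ℕ → ℝ} {z : Fin (n + 1) → ℝ}

theorem sum_range_eq_sum_one_div_sub_sum_one_div
    (h : ∑ j, C (z j) * ∏ k ∈ univ.erase j, (C (r k) - X) = ∏ i ∈ Icc 1 n, (C (β i) - X))
    (hr : ∀ j ≤ n, r j ≠ 0) (hβ : ∀ i ∈ Icc 1 n, β i ≠ 0)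
    (hK : ∀ j : Fin (n + 1),
      K j = (∏ k ∈ range (n + 1), r k) / (∏ i ∈ Icc 1 n, β i) * (z j / r j ^ 2)) :
    ∑ j ∈ range (n + 1), K j = ∑ j ∈ range (n + 1), 1 / r j - ∑ i ∈ Icc 1 n, 1 / β i := by
  rw [← Fin.sum_univ_eq_sum_range, sum_congr rfl fun j _ => hK j, ← mul_sum,
    ← Fin.prod_univ_eq_prod_range, div_mul_eq_mul_div, mul_comm,
    sum_div_sq_mul_prod_eq h (fun j _ => hr j j.is_le) hβ,
    mul_div_cancel_left₀ _ (prod_ne_zero_iff.2 hβ), ← Fin.sum_univ_eq_sum_range]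
  simp only [one_div]

theorem sum_range_mul_eq_one
    (h : ∑ j, C (z j) * ∏ k ∈ univ.erase j, (C (r k) - X) = ∏ i ∈ Icc 1 n, (C (β i) - X))
    (hr : ∀ j ≤ n, r j ≠ 0) (hβ : ∀ i ∈ Icc 1 n, β i ≠ 0)
    (hK : ∀ j : Fin (n + 1),
      K j = (∏ k ∈ range (n + 1), r k) / (∏ i ∈ Icc 1 n, β i) * (z j / r j ^ 2)) :
    ∑ j ∈ range (n + 1), K j * r j = 1 := by
  have hterm : ∀ j : Fin (n + 1), K j * r j
      = (∏ k ∈ range (n + 1), r k) / (∏ i ∈ Icc 1 n, β i) * (z j / r j) := fun j => by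
    rw [hK]
    field_simp [hr j j.is_le]
  rw [← Fin.sum_univ_eq_sum_range (fun j => K j * r j), sum_congr rfl fun j _ => hterm j,
    ← mul_sum, ← Fin.prod_univ_eq_prod_range, div_mul_eq_mul_div, mul_comm,
    sum_div_mul_prod_eq_prod h (fun j _ => hr j j.is_le), div_self (prod_ne_zero_iff.2 hβ)]

end SmoothFitConditions

section Gluing

variable {f f' f'' : ℝ → ℝ} {b : ℝ}

theorem continuous_indicator_Iio (hf : Continuous f) (h0 : f b = 0) :
    Continuous ((Set.Iio b).indicator f) := by
  classical
  rw [← Set.piecewise_eq_indicator]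
  exact hf.piecewise (by simp [h0]) continuous_const

theorem hasDerivAt_indicator_Iio (hf : ∀ t, HasDerivAt f (f' t) t) (h0 : f b = 0)
    (h1 : f' b = 0) (t : ℝ) :
    HasDerivAt ((Set.Iio b).indicator f) ((Set.Iio b).indicator f' t) t := by
  rcases lt_trichotomy t b with ht | rfl | ht
  · rw [Set.indicator_of_mem (Set.mem_Iio.2 ht)]
    exact (hf t).congr_of_eventuallyEq <| (eventually_lt_nhds ht).mono fun s hs =>
      Set.indicator_of_mem (Set.mem_Iio.2 hs) f
  · rw [Set.indicator_of_notMem Set.self_notMem_Iio]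
    have hleft : HasDerivWithinAt ((Set.Iio t).indicator f) 0 (Set.Iic t) t := by
      refine h1 ▸ (hf t).hasDerivWithinAt.congr (fun s hs => ?_) (by simp [h0])
      rcases (Set.mem_Iic.1 hs).lt_or_eq with hs | rfl
      · exact Set.indicator_of_mem (Set.mem_Iio.2 hs) f
      · simp [h0]
    have hright : HasDerivWithinAt ((Set.Iio t).indicator f) 0 (Set.Ici t) t :=
      (hasDerivWithinAt_const t _ 0).congr (fun s hs => by simp [Set.mem_Ici.1 hs]) (by simp)
    have hboth := hleft.union hright
    rwa [Set.Iic_union_Ici, hasDerivWithinAt_univ] at hboth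
  · rw [Set.indicator_of_notMem (Set.notMem_Iio.2 ht.le)]
    exact (hasDerivAt_const t 0).congr_of_eventuallyEq <| (eventually_gt_nhds ht).mono
      fun s hs => Set.indicator_of_notMem (Set.notMem_Iio.2 hs.le) f

theorem contDiff_two_indicator_Iio (hf : ∀ t, HasDerivAt f (f' t) t)
    (hf' : ∀ t, HasDerivAt f' (f'' t) t) (hf'' : Continuous f'') (h0 : f b = 0)
    (h1 : f' b = 0) (h2 : f'' b = 0) : ContDiff ℝ 2 ((Set.Iio b).indicator f) := by
  have hd := hasDerivAt_indicator_Iio hf h0 h1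
  have hd' := hasDerivAt_indicator_Iio hf' h1 h2
  rw [show (2 : WithTop ℕ∞) = 1 + 1 from rfl, contDiff_succ_iff_deriv,
    funext fun t => (hd t).deriv, contDiff_one_iff_deriv, funext fun t => (hd' t).deriv]
  exact ⟨fun t => (hd t).differentiableAt, by simp, fun t => (hd' t).differentiableAt,
    continuous_indicator_Iio hf'' h2⟩

end Gluing

theorem hasDerivAt_sum_mul_exp (a r : ℕ → ℝ) (n : ℕ) (b t : ℝ) :
    HasDerivAt (fun s => ∑ j ∈ range n, a j * exp (r j * (s - b)))
      (∑ j ∈ range n, a j * r j * exp (r j * (t - b))) t := by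
  refine (HasDerivAt.fun_sum fun j _ =>
    ((((hasDerivAt_id t).sub_const b).const_mul (r j)).exp.const_mul (a j))).congr_deriv ?_
  refine sum_congr rfl fun j _ => ?_
  simp only [id_eq]
  ring

noncomputable def smoothFitCorrection (K r : ℕ → ℝ) (n : ℕ) (α b c : ℝ) : ℝ → ℝ :=
  (Set.Iio b).indicator fun t =>
    ∑ j ∈ range n, K j / (α * r j) * (exp (r j * (t - b)) - 1)
      - ((t - c) ^ 2 - (b - c) ^ 2) / (2 * α)

section SmoothFitCorrection

variable {K r : ℕ → ℝ} {n : ℕ} {α b c : ℝ}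

theorem contDiff_smoothFitCorrection (hr : ∀ j ∈ range n, r j ≠ 0) (hα : α ≠ 0)
    (hK : ∑ j ∈ range n, K j = b - c) (hKr : ∑ j ∈ range n, K j * r j = 1) :
    ContDiff ℝ 2 (smoothFitCorrection K r n α b c) := by
  set a : ℕ → ℝ := fun j => K j / (α * r j)
  have hf : ∀ t, HasDerivAt (fun s => ∑ j ∈ range n, a j * (exp (r j * (s - b)) - 1)
      - ((s - c) ^ 2 - (b - c) ^ 2) / (2 * α))
      (∑ j ∈ range n, a j * r j * exp (r j * (t - b)) - (t - c) / α) t := by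
    intro t
    have hq := ((((hasDerivAt_id' t).sub_const c).fun_pow 2).sub_const ((b - c) ^ 2)).div_const
      (2 * α)
    simp only [mul_sub_one, sum_sub_distrib]
    refine (((hasDerivAt_sum_mul_exp a r n b t).sub_const _).fun_sub hq).congr_deriv ?_
    rw [sub_right_inj]
    field_simp
    ring
  have hf' : ∀ t, HasDerivAt
      (fun s => ∑ j ∈ range n, a j * r j * exp (r j * (s - b)) - (s - c) / α)
      (∑ j ∈ range n, a j * r j * r j * exp (r j * (t - b)) - 1 / α) t := fun t =>
    (hasDerivAt_sum_mul_exp (fun j => a j * r j) r n b t).sub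
      (((hasDerivAt_id t).sub_const c).div_const α)
  have ha1 : ∑ j ∈ range n, a j * r j = (b - c) / α := by
    rw [← hK, sum_div]
    refine sum_congr rfl fun j hj => ?_
    simp only [a]
    field_simp [hr j hj]
  have ha2 : ∑ j ∈ range n, a j * r j * r j = 1 / α := by
    rw [← hKr, sum_div]
    refine sum_congr rfl fun j hj => ?_
    simp only [a]
    field_simp [hr j hj]
  refine contDiff_two_indicator_Iio hf hf' (by fun_prop) (by simp) ?_ ?_ <;> simp [ha1, ha2]

theorem smoothFitCorrection_of_lt {t : ℝ} (ht : t < b) :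
    smoothFitCorrection K r n α b c t =
      ∑ j ∈ range n, K j / (α * r j) * (exp (r j * (t - b)) - 1)
        - ((t - c) ^ 2 - (b - c) ^ 2) / (2 * α) :=
  Set.indicator_of_mem (Set.mem_Iio.2 ht) _

theorem smoothFitCorrection_of_le {t : ℝ} (ht : b ≤ t) :
    smoothFitCorrection K r n α b c t = 0 :=
  Set.indicator_of_notMem (Set.notMem_Iio.2 ht) _

theorem piecewise_eq_smoothFitCorrection (hα : 0 < α) {x y : ℝ} (hy : 0 ≤ y) :
    (if x < b then
        ∑ j ∈ range n, K j / (α * r j) * (1 - exp (-(α * r j * y))) * exp (r j * (x - b))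
      else if x < α * y + b then
        (∑ j ∈ range n, K j / (α * r j) * (1 - exp (-(α * r j * (y - (x - b) / α)))))
          + ((x - c) ^ 2 - (b - c) ^ 2) / (2 * α)
      else (x - c) * y - α * y ^ 2 / 2)
      = (x - c) * y - α * y ^ 2 / 2 + smoothFitCorrection K r n α b c x
        - smoothFitCorrection K r n α b c (x - α * y) := by
  have hαy : 0 ≤ α * y := mul_nonneg hα.le hy
  have hq : ((x - c) ^ 2 - (b - c) ^ 2) / (2 * α)
      = (x - c) * y - α * y ^ 2 / 2 + ((x - α * y - c) ^ 2 - (b - c) ^ 2) / (2 * α) := by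
    field_simp
    ring
  split_ifs with hxb hxy
  · rw [smoothFitCorrection_of_lt hxb, smoothFitCorrection_of_lt (by linarith)]
    have hsum : ∑ j ∈ range n, K j / (α * r j) * (1 - exp (-(α * r j * y))) * exp (r j * (x - b))
        = ∑ j ∈ range n, K j / (α * r j) * (exp (r j * (x - b)) - 1)
          - ∑ j ∈ range n, K j / (α * r j) * (exp (r j * (x - α * y - b)) - 1) := by
      rw [← sum_sub_distrib]
      refine sum_congr rfl fun j _ => ?_
      rw [show r j * (x - α * y - b) = r j * (x - b) + -(α * r j * y) by ring, exp_add]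
      ring
    rw [hsum]
    linear_combination hq
  · rw [smoothFitCorrection_of_le (not_lt.1 hxb), smoothFitCorrection_of_lt (by linarith)]
    have hsum : ∑ j ∈ range n, K j / (α * r j) * (1 - exp (-(α * r j * (y - (x - b) / α))))
        = -∑ j ∈ range n, K j / (α * r j) * (exp (r j * (x - α * y - b)) - 1) := by
      rw [← sum_neg_distrib]
      refine sum_congr rfl fun j _ => ?_
      rw [show -(α * r j * (y - (x - b) / α)) = r j * (x - α * y - b) by field_simp; ring]
      ring
    rw [hsum]
    linear_combination hq
  · rw [smoothFitCorrection_of_le (by linarith), smoothFitCorrection_of_le (by linarith)]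
    ring

end SmoothFitCorrection

theorem regularity_of_eq_quadratic_add_sub_shift {v : ℝ → ℝ → ℝ} {G : ℝ → ℝ} {α c : ℝ}
    (hG : ContDiff ℝ 2 G)
    (hv : ∀ x y, 0 ≤ y → v x y = (x - c) * y - α * y ^ 2 / 2 + G x - G (x - α * y)) :
    ContinuousOn (fun q : ℝ × ℝ => v q.1 q.2) {q : ℝ × ℝ | 0 ≤ q.2} ∧
    (∀ y : ℝ, 0 < y → ContDiff ℝ 2 (fun x => v x y)) ∧
    (∀ x : ℝ, ContDiffOn ℝ 1 (fun y => v x y) (Set.Ioi 0)) ∧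
    (∀ x : ℝ, v x 0 = 0) := by
  have hG1 : ContDiff ℝ 1 G := hG.of_le one_le_two
  refine ⟨?_, fun y hy => ?_, fun x => ?_, fun x => by simp [hv x 0 le_rfl]⟩
  · exact (Continuous.continuousOn (by fun_prop)).congr fun q hq => hv q.1 q.2 hq
  · rw [funext fun x => hv x y hy.le]
    fun_prop
  · exact (ContDiff.contDiffOn (by fun_prop)).congr fun y hy => hv x y (le_of_lt hy)

theorem stmt12_general (c : ℝ)
    (mp : ℕ)
    (βp : ℕ → ℝ)
    (r : ℕ → ℝ)
    (hr0 : 0 < r 0)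
    (hinter : ∀ k, 1 ≤ k → k ≤ mp → r (k - 1) < βp k ∧ βp k < r k)
    (A : Matrix (Fin (mp + 1)) (Fin (mp + 1)) ℝ)
    (hA : ∀ i j : Fin (mp + 1), A i j = if (i : ℕ) = 0 then 1 else βp i / (βp i - r j))
    (hdet : A.det ≠ 0)
    (R : ℝ)
    (hR : R = (∏ k ∈ Finset.range (mp + 1), r k) / ∏ k ∈ Finset.Icc 1 mp, βp k)
    (K : ℕ → ℝ)
    (hK : ∀ j : Fin (mp + 1), K j = R * cof A 0 j / ((r j) ^ 2 * A.det))
    (b : ℝ)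
    (hb : b = c + (∑ i ∈ Finset.range (mp + 1), 1 / r i) - ∑ i ∈ Finset.Icc 1 mp, 1 / βp i)
    (α : ℝ) (hα : 0 < α)
    (v : ℝ → ℝ → ℝ)
    (hv : ∀ x y : ℝ,
      v x y =
        if x < b then
          ∑ j ∈ Finset.range (mp + 1),
            K j / (α * r j) * (1 - Real.exp (-(α * r j * y))) * Real.exp (r j * (x - b))
        else if x < α * y + b then
          (∑ j ∈ Finset.range (mp + 1),
            K j / (α * r j) * (1 - Real.exp (-(α * r j * (y - (x - b) / α)))))
            + ((x - c) ^ 2 - (b - c) ^ 2) / (2 * α)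
        else (x - c) * y - α * y ^ 2 / 2)
    :
    ContinuousOn (fun q : ℝ × ℝ => v q.1 q.2) {q : ℝ × ℝ | 0 ≤ q.2} ∧
    (∀ y : ℝ, 0 < y → ContDiff ℝ 2 (fun x => v x y)) ∧
    (∀ x : ℝ, ContDiffOn ℝ 1 (fun y => v x y) (Set.Ioi 0)) ∧
    (∀ x : ℝ, v x 0 = 0) := by
  have hI : Interlaces r βp mp := hinter
  have hr : ∀ j ≤ mp, r j ≠ 0 := fun j hj => (hI.pos hr0 hj).ne'
  have hβ : ∀ i ∈ Icc 1 mp, βp i ≠ 0 := fun i hi => by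
    obtain ⟨hi1, hin⟩ := mem_Icc.1 hi
    exact (hr0.trans (hI.lt hi1 hin hi1)).ne'
  have hpoly := sum_C_mul_prod_erase_C_sub_X_eq (s := univ) (r := fun j : Fin (mp + 1) => r j)
    (by simp) (sum_cof_zero_div_det_eq_one (fun j => by simp [hA]) hdet)
    (fun i hi => sum_cof_zero_div_det_div_sub_eq_zero hA hdet hi (hβ i hi)) hI.injOn
    fun i hi j _ => hI.ne (mem_Icc.1 hi).1 (mem_Icc.1 hi).2 j.is_le
  have hKz : ∀ j : Fin (mp + 1), K j
      = (∏ k ∈ range (mp + 1), r k) / (∏ i ∈ Icc 1 mp, βp i) * (cof A 0 j / A.det / r j ^ 2) := by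
    intro j
    rw [hK, hR]
    field_simp
  have hG : ContDiff ℝ 2 (smoothFitCorrection K r (mp + 1) α b c) := by
    refine contDiff_smoothFitCorrection (fun j hj => hr j (mem_range_succ_iff.1 hj)) hα.ne' ?_
      (sum_range_mul_eq_one hpoly hr hβ hKz)
    rw [sum_range_eq_sum_one_div_sub_sum_one_div hpoly hr hβ hKz, hb]
    ring
  exact regularity_of_eq_quadratic_add_sub_shift hG fun x y hy =>
    (hv x y).trans (piecewise_eq_smoothFitCorrection hα hy)

theorem stmt12 (σ μ ρ lamn lamp c : ℝ)
    (hσ : 0 < σ) (hρ : 0 < ρ) (hlamn : 0 < lamn) (hlamp : 0 < lamp) (hc : 0 < c)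
    (mp mn : ℕ) (hmp : 1 ≤ mp) (hmn : 1 ≤ mn)
    (ωp βp ωn βn : ℕ → ℝ)
    (hωp : ∀ k, 1 ≤ k → k ≤ mp → 0 < ωp k)
    (hωpsum : ∑ k ∈ Finset.Icc 1 mp, ωp k = 1)
    (hβp1 : 0 < βp 1)
    (hβpmono : ∀ k, 1 ≤ k → k < mp → βp k < βp (k + 1))
    (hωn : ∀ k, 1 ≤ k → k ≤ mn → 0 < ωn k)
    (hωnsum : ∑ k ∈ Finset.Icc 1 mn, ωn k = 1)
    (hβn1 : 0 < βn 1)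
    (hβnmono : ∀ k, 1 ≤ k → k < mn → βn k < βn (k + 1))
    (r : ℕ → ℝ)
    (hroot : ∀ j, j ≤ mp →
      σ ^ 2 * (r j) ^ 2 / 2 + μ * r j - (ρ + lamn + lamp)
        + lamp * ∑ i ∈ Finset.Icc 1 mp, ωp i * βp i / (βp i - r j)
        + lamn * ∑ i ∈ Finset.Icc 1 mn, ωn i * βn i / (r j + βn i) = 0)
    (hr0 : 0 < r 0)
    (hinter : ∀ k, 1 ≤ k → k ≤ mp → r (k - 1) < βp k ∧ βp k < r k)
    (A : Matrix (Fin (mp + 1)) (Fin (mp + 1)) ℝ)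
    (hA : ∀ i j : Fin (mp + 1), A i j = if (i : ℕ) = 0 then 1 else βp i / (βp i - r j))
    (hdet : A.det ≠ 0)
    (R : ℝ)
    (hR : R = (∏ k ∈ Finset.range (mp + 1), r k) / ∏ k ∈ Finset.Icc 1 mp, βp k)
    (K : ℕ → ℝ)
    (hK : ∀ j : Fin (mp + 1), K j = R * cof A 0 j / ((r j) ^ 2 * A.det))
    (b : ℝ)
    (hb : b = c + (∑ i ∈ Finset.range (mp + 1), 1 / r i) - ∑ i ∈ Finset.Icc 1 mp, 1 / βp i)
    (α : ℝ) (hα : 0 < α)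
    (v : ℝ → ℝ → ℝ)
    (hv : ∀ x y : ℝ,
      v x y =
        if x < b then
          ∑ j ∈ Finset.range (mp + 1),
            K j / (α * r j) * (1 - Real.exp (-(α * r j * y))) * Real.exp (r j * (x - b))
        else if x < α * y + b then
          (∑ j ∈ Finset.range (mp + 1),
            K j / (α * r j) * (1 - Real.exp (-(α * r j * (y - (x - b) / α)))))
            + ((x - c) ^ 2 - (b - c) ^ 2) / (2 * α)
        else (x - c) * y - α * y ^ 2 / 2)
    :
    ContinuousOn (fun q : ℝ × ℝ => v q.1 q.2) {q : ℝ × ℝ | 0 ≤ q.2} ∧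
    (∀ y : ℝ, 0 < y → ContDiff ℝ 2 (fun x => v x y)) ∧
    (∀ x : ℝ, ContDiffOn ℝ 1 (fun y => v x y) (Set.Ioi 0)) ∧
    (∀ x : ℝ, v x 0 = 0) :=
  stmt12_general c mp βp r hr0 hinter A hA hdet R hR K hK b hb α hα v hv
end
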